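/- arXiv:1403.7790 — 4 statements merged into one kernel-verified Lean document; each statement's English description precedes it below -/
import Mathlib

section
/- For every t ∈ ℕ and i ∈ {1,2} with j the other index, the recursively defined information set admits the closed form I_i(t) = {(i,k) : 0 ≤ k ≤ t} ∪ {(j,k) : k ∈ ℕ, k + e_j(t) ≤ t}. -/
/-- Closed form for the recursively defined information sets: for each controller
`i : Fin 2` (the other controller being `i + 1`),
`I i t = {(i,k) : k ≤ t} ∪ {(i+1,k) : k + e (i+1) t ≤ t}`,
where `e j` is the effective delay of the link from plant `j`. -/
theorem stmt_3 (D : ℕ) (hD : 1 ≤ D) (d : Fin 2 → ℕ → ℕ)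
    (hd : ∀ i τ, 1 ≤ d i τ ∧ d i τ ≤ D)
    (e : Fin 2 → ℕ → ℕ)
    (he : ∀ i t, e i t =
      (Finset.Icc (t - (D - 1)) t).inf' (Finset.nonempty_Icc.mpr (Nat.sub_le t (D - 1)))
        (fun τ => d i τ + (t - τ)))
    (I : Fin 2 → ℕ → Set (Fin 2 × ℕ))
    (hI0 : ∀ i, I i 0 = {(i, 0)})
    (hIrec : ∀ i t, I i (t + 1) =
      I i t ∪ {(i, t + 1)} ∪
        {p : Fin 2 × ℕ | p.1 = i + 1 ∧ p.2 + d (i + 1) (t + 1) ≤ t + 1}) :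
    ∀ i t, I i t =
      {p : Fin 2 × ℕ | p.1 = i ∧ p.2 ≤ t} ∪
        {p : Fin 2 × ℕ | p.1 = i + 1 ∧ p.2 + e (i + 1) t ≤ t} := by
  have hpos : ∀ j t, 1 ≤ e j t := by
    intro j t
    rw [he]
    obtain ⟨b, hb, hval⟩ := Finset.exists_mem_eq_inf'
      (Finset.nonempty_Icc.mpr (Nat.sub_le t (D - 1))) (fun τ => d j τ + (t - τ))
    rw [hval]
    have := (hd j b).1
    omega
  have hkey : ∀ j t k, k + e j (t+1) ≤ t+1 ↔ (k + d j (t+1) ≤ t+1 ∨ k + e j t ≤ t) := by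
    intro j t k
    constructor
    · intro h
      rw [he] at h
      obtain ⟨b, hb, hval⟩ := Finset.exists_mem_eq_inf'
        (Finset.nonempty_Icc.mpr (Nat.sub_le (t+1) (D - 1))) (fun τ => d j τ + (t+1 - τ))
      rw [hval] at h
      simp only [Finset.mem_Icc] at hb
      by_cases hbt : b = t + 1
      · left; subst hbt; omega
      · right
        have hble : b ≤ t := by omega
        have hle : e j t ≤ d j b + (t - b) := by
          rw [he]
          exact Finset.inf'_le _ (by simp only [Finset.mem_Icc]; omega)
        omega
    · intro h
      have h1 : e j (t+1) ≤ d j (t+1) + ((t+1) - (t+1)) := by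
        rw [he]
        exact Finset.inf'_le _ (by simp only [Finset.mem_Icc]; omega)
      rcases h with h | h
      · omega
      · obtain ⟨b, hb, hval⟩ := Finset.exists_mem_eq_inf'
          (Finset.nonempty_Icc.mpr (Nat.sub_le t (D - 1))) (fun τ => d j τ + (t - τ))
        simp only [Finset.mem_Icc] at hb
        rw [he] at h
        rw [hval] at h
        by_cases hb2 : t + 1 - (D - 1) ≤ b
        · have h2 : e j (t+1) ≤ d j b + (t + 1 - b) := by
            rw [he]
            exact Finset.inf'_le _ (by simp only [Finset.mem_Icc]; omega)
          omega
        · have hd1 := (hd j b).1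
          have hd2 := (hd j (t+1)).2
          omega
  intro i t
  induction t with
  | zero =>
    rw [hI0]
    ext p
    simp only [Set.mem_singleton_iff, Set.mem_union, Set.mem_setOf_eq, Prod.ext_iff]
    constructor
    · rintro ⟨h1, h2⟩; left; exact ⟨h1, le_of_eq h2⟩
    · rintro (⟨h1, h2⟩ | ⟨h1, h2⟩)
      · exact ⟨h1, Nat.le_zero.mp h2⟩
      · have := hpos (i+1) 0; omega
  | succ t IH =>
    rw [hIrec, IH]
    ext p
    simp only [Set.mem_union, Set.mem_setOf_eq, Set.mem_singleton_iff, Prod.ext_iff]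
    have hk := hkey (i+1) t p.2
    have hne : i ≠ i + 1 := by omega
    constructor
    · rintro (((⟨h1, h2⟩ | ⟨h1, h2⟩) | ⟨h1, h2⟩) | ⟨h1, h2⟩)
      · exact Or.inl ⟨h1, by omega⟩
      · exact Or.inr ⟨h1, by omega⟩
      · exact Or.inl ⟨h1, by omega⟩
      · exact Or.inr ⟨h1, by omega⟩
    · rintro (⟨h1, h2⟩ | ⟨h1, h2⟩)
      · rcases Nat.lt_or_ge p.2 (t+1) with h | h
        · exact Or.inl (Or.inl (Or.inl ⟨h1, by omega⟩))
        · exact Or.inl (Or.inr ⟨h1, by omega⟩)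
      · rcases hk.mp h2 with h | h
        · exact Or.inr ⟨h1, h⟩
        · exact Or.inl (Or.inl (Or.inr ⟨h1, h⟩))
end

section
/- (Lemma 3 of the paper.) For every t ∈ ℕ with t + 1 ≥ D, and i ∈ {1,2} with j the other index, the information set satisfies the recursion I_i(t+1) = I_i(t) ∪ {(i, t+1)} ∪ I_j(t+1−e_j(t+1)). (Note t+1−e_j(t+1) ≥ 0 since e_j(t+1) ≤ D ≤ t+1.) -/
/-!
Unrolling the recursion, controller `i` knows its own states up to time `t` and a state
`(j, k)` exactly when it arrived at some `τ ∈ [1, t]`, i.e. `k + d_j τ ≤ τ`. Once `D ≤ t + 1`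
the window defining `e_j (t + 1)` lies in `[1, t + 1]`, so the minimiser `τ₀` shows that every
`k ≤ t + 1 - e_j (t + 1)` has arrived by time `t + 1`, while `e_j (t + 1) ≤ d_j (t + 1)` shows
that everything arriving at time `t + 1` is such a `k`. The states of `i` known to `j` are older
than `t + 1` because delays are positive.
-/

open Set

/-- The states `k` of a plant whose value has reached the other controller by time `t`, when the
link has delay `δ τ` at time `τ`. -/
def received (δ : ℕ → ℕ) (t : ℕ) : Set ℕ := {k | ∃ τ, 1 ≤ τ ∧ τ ≤ t ∧ k + δ τ ≤ τ}

def effectiveDelay (D : ℕ) (δ : ℕ → ℕ) (t : ℕ) : ℕ :=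
  (Finset.Icc (t - (D - 1)) t).inf' (Finset.nonempty_Icc.mpr (Nat.sub_le t (D - 1)))
    (fun τ => δ τ + (t - τ))

theorem received_succ (δ : ℕ → ℕ) (t : ℕ) :
    received δ (t + 1) = received δ t ∪ {k | k + δ (t + 1) ≤ t + 1} := by
  ext k
  simp only [received, mem_union, mem_ofPred_eq]
  constructor
  · rintro ⟨τ, h1, hτ, hk⟩
    rcases Nat.lt_or_ge τ (t + 1) with hlt | hge
    · exact Or.inl ⟨τ, h1, Nat.lt_succ_iff.mp hlt, hk⟩
    · obtain rfl : τ = t + 1 := le_antisymm hτ hge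
      exact Or.inr hk
  · rintro (⟨τ, h1, hτ, hk⟩ | hk)
    · exact ⟨τ, h1, hτ.trans t.le_succ, hk⟩
    · exact ⟨t + 1, t.succ_pos, le_rfl, hk⟩

theorem lt_of_mem_received {δ : ℕ → ℕ} {t k : ℕ} (hδ : ∀ τ, 1 ≤ δ τ)
    (hk : k ∈ received δ t) : k < t := by
  obtain ⟨τ, -, hτ, hkτ⟩ := hk
  have := hδ τ
  omega

theorem effectiveDelay_le (D : ℕ) (δ : ℕ → ℕ) (t : ℕ) : effectiveDelay D δ t ≤ δ t := by
  have := Finset.inf'_le (fun τ => δ τ + (t - τ))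
    (Finset.mem_Icc.mpr ⟨Nat.sub_le t (D - 1), le_rfl⟩)
  rwa [Nat.sub_self, add_zero] at this

theorem exists_effectiveDelay_eq (D : ℕ) (δ : ℕ → ℕ) (t : ℕ) :
    ∃ τ, t - (D - 1) ≤ τ ∧ τ ≤ t ∧ effectiveDelay D δ t = δ τ + (t - τ) := by
  obtain ⟨τ, hτ, heq⟩ := Finset.exists_mem_eq_inf'
    (Finset.nonempty_Icc.mpr (Nat.sub_le t (D - 1))) (fun τ => δ τ + (t - τ))
  exact ⟨τ, (Finset.mem_Icc.mp hτ).1, (Finset.mem_Icc.mp hτ).2, heq⟩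

theorem Iic_sub_effectiveDelay_subset_received {D : ℕ} {δ : ℕ → ℕ} {t : ℕ}
    (hδ : ∀ τ, δ τ ≤ D) (ht : D ≤ t + 1) :
    Iic (t + 1 - effectiveDelay D δ (t + 1)) ⊆ received δ (t + 1) := by
  intro k hk
  obtain ⟨τ, hτ₁, hτ₂, heq⟩ := exists_effectiveDelay_eq D δ (t + 1)
  have hle := (effectiveDelay_le D δ (t + 1)).trans (hδ (t + 1))
  rw [mem_Iic] at hk
  exact ⟨τ, by omega, hτ₂, by omega⟩

theorem arrivals_subset_Iic_sub_effectiveDelay (D : ℕ) (δ : ℕ → ℕ) (t : ℕ) :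
    {k | k + δ t ≤ t} ⊆ Iic (t - effectiveDelay D δ t) := by
  intro k hk
  have := effectiveDelay_le D δ t
  simp only [mem_ofPred_eq, mem_Iic] at hk ⊢
  omega

theorem received_succ_eq_union_Iic {D : ℕ} {δ : ℕ → ℕ} {t : ℕ}
    (hδ : ∀ τ, δ τ ≤ D) (ht : D ≤ t + 1) :
    received δ (t + 1) = received δ t ∪ Iic (t + 1 - effectiveDelay D δ (t + 1)) := by
  refine (received_succ δ t).trans (subset_antisymm ?_ ?_)
  · exact union_subset_union_right _ (arrivals_subset_Iic_sub_effectiveDelay D δ (t + 1))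
  · refine union_subset subset_union_left ?_
    rw [← received_succ]
    exact Iic_sub_effectiveDelay_subset_received hδ ht

theorem infoSet_eq {ι : Type*} {i j : ι} {δ : ℕ → ℕ} {I : ℕ → Set (ι × ℕ)}
    (h0 : I 0 = {(i, 0)})
    (hrec : ∀ t, I (t + 1) = I t ∪ {(i, t + 1)} ∪ {p | p.1 = j ∧ p.2 + δ (t + 1) ≤ t + 1})
    (t : ℕ) : I t = {i} ×ˢ Iic t ∪ {j} ×ˢ received δ t := by
  induction t with
  | zero =>
    ext ⟨a, k⟩
    simp [h0, received]
  | succ t ih =>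
    rw [hrec, ih, received_succ]
    ext ⟨a, k⟩
    simp only [mem_union, mem_prod, mem_singleton_iff, mem_Iic, mem_ofPred_eq, Prod.mk.injEq,
      Nat.le_add_one_iff]
    tauto

theorem stmt_4_general (D : ℕ) (d : Fin 2 → ℕ → ℕ)
    (hd : ∀ i τ, 1 ≤ d i τ ∧ d i τ ≤ D)
    (e : Fin 2 → ℕ → ℕ)
    (he : ∀ i t, e i t =
      (Finset.Icc (t - (D - 1)) t).inf' (Finset.nonempty_Icc.mpr (Nat.sub_le t (D - 1)))
        (fun τ => d i τ + (t - τ)))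
    (I : Fin 2 → ℕ → Set (Fin 2 × ℕ))
    (hI0 : ∀ i, I i 0 = {(i, 0)})
    (hIrec : ∀ i t, I i (t + 1) =
      I i t ∪ {(i, t + 1)} ∪
        {p : Fin 2 × ℕ | p.1 = i + 1 ∧ p.2 + d (i + 1) (t + 1) ≤ t + 1}) :
    ∀ i t, D ≤ t + 1 →
      I i (t + 1) = I i t ∪ {(i, t + 1)} ∪ I (i + 1) (t + 1 - e (i + 1) (t + 1)) := by
  intro i t ht
  have hchar (i : Fin 2) (t : ℕ) := infoSet_eq (hI0 i) (hIrec i) t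
  have hii : i + 1 + 1 = i := by fin_cases i <;> rfl
  rw [he, hchar, hchar i t, hchar (i + 1), hii, ← effectiveDelay,
    received_succ_eq_union_Iic (δ := d (i + 1)) (fun τ => (hd (i + 1) τ).2) ht]
  ext ⟨a, k⟩
  have hown : k ∈ received (d i) (t + 1 - effectiveDelay D (d (i + 1)) (t + 1)) → k ≤ t :=
    fun hk => by have := lt_of_mem_received (fun τ => (hd i τ).1) hk; omega
  simp only [mem_union, mem_prod, mem_singleton_iff, mem_Iic, Prod.mk.injEq, Nat.le_add_one_iff]
  tauto

/-- Lemma 3 of the paper: for `t + 1 ≥ D`, the information set satisfies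
`I i (t+1) = I i t ∪ {(i, t+1)} ∪ I (i+1) (t+1 − e (i+1) (t+1))`,
where `i + 1 : Fin 2` is the other controller. -/
theorem stmt_4 (D : ℕ) (hD : 1 ≤ D) (d : Fin 2 → ℕ → ℕ)
    (hd : ∀ i τ, 1 ≤ d i τ ∧ d i τ ≤ D)
    (e : Fin 2 → ℕ → ℕ)
    (he : ∀ i t, e i t =
      (Finset.Icc (t - (D - 1)) t).inf' (Finset.nonempty_Icc.mpr (Nat.sub_le t (D - 1)))
        (fun τ => d i τ + (t - τ)))
    (I : Fin 2 → ℕ → Set (Fin 2 × ℕ))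
    (hI0 : ∀ i, I i 0 = {(i, 0)})
    (hIrec : ∀ i t, I i (t + 1) =
      I i t ∪ {(i, t + 1)} ∪
        {p : Fin 2 × ℕ | p.1 = i + 1 ∧ p.2 + d (i + 1) (t + 1) ≤ t + 1}) :
    ∀ i t, D ≤ t + 1 →
      I i (t + 1) = I i t ∪ {(i, t + 1)} ∪ I (i + 1) (t + 1 - e (i + 1) (t + 1)) :=
  stmt_4_general D d hd e he I hI0 hIrec
end

section
/- (Nestedness inclusion from Lemma 5 of the paper.) For every t ∈ ℕ and i ∈ {1,2} with j the other index, I_i(t) ⊆ I_j(t + D); moreover I_i(t) ⊆ I_i(t+1). -/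
/-- Nestedness inclusion from Lemma 5 of the paper: for every `t` and controller `i`,
`I i t ⊆ I (i+1) (t + D)` (where `i + 1 : Fin 2` is the other controller), and moreover
`I i t ⊆ I i (t+1)`. -/
theorem stmt_5 (D : ℕ) (hD : 1 ≤ D) (d : Fin 2 → ℕ → ℕ)
    (hd : ∀ i τ, 1 ≤ d i τ ∧ d i τ ≤ D)
    (e : Fin 2 → ℕ → ℕ)
    (he : ∀ i t, e i t =
      (Finset.Icc (t - (D - 1)) t).inf' (Finset.nonempty_Icc.mpr (Nat.sub_le t (D - 1)))
        (fun τ => d i τ + (t - τ)))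
    (I : Fin 2 → ℕ → Set (Fin 2 × ℕ))
    (hI0 : ∀ i, I i 0 = {(i, 0)})
    (hIrec : ∀ i t, I i (t + 1) =
      I i t ∪ {(i, t + 1)} ∪
        {p : Fin 2 × ℕ | p.1 = i + 1 ∧ p.2 + d (i + 1) (t + 1) ≤ t + 1}) :
    ∀ i t, I i t ⊆ I (i + 1) (t + D) ∧ I i t ⊆ I i (t + 1) := by
  have h2 : ∀ j : Fin 2, j + 1 + 1 = j := by decide
  have mono : ∀ i t, I i t ⊆ I i (t + 1) := by
    intro i t p hp
    rw [hIrec]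
    exact Or.inl (Or.inl hp)
  have self : ∀ (j : Fin 2) k m, k ≤ m → (j, k) ∈ I j m := by
    intro j k m
    induction m with
    | zero =>
      intro hk
      interval_cases k
      simp [hI0]
    | succ m ih =>
      intro hk
      rcases Nat.lt_or_ge k (m + 1) with h | h
      · exact mono j m (ih (Nat.lt_succ_iff.mp h))
      · have hk' : k = m + 1 := le_antisymm hk h
        subst hk'
        rw [hIrec]
        exact Or.inl (Or.inr rfl)
  have main : ∀ t (i : Fin 2), I i t ⊆ I (i + 1) (t + D) := by
    intro t
    induction t with
    | zero =>
      intro i p hp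
      rw [hI0] at hp
      rcases hp with rfl
      obtain ⟨D', rfl⟩ : ∃ D', D = D' + 1 := ⟨D - 1, (Nat.succ_pred_eq_of_pos hD).symm⟩
      rw [show 0 + (D' + 1) = D' + 1 by omega, hIrec]
      refine Or.inr ⟨?_, ?_⟩
      · exact (h2 i).symm
      · have := (hd (i + 1 + 1) (D' + 1)).2
        simpa [h2 i] using this
    | succ t ih =>
      intro i p hp
      rw [hIrec] at hp
      rw [show t + 1 + D = (t + D) + 1 by omega, hIrec]
      rcases hp with (hp | hp) | hp
      · exact Or.inl (Or.inl (ih i hp))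
      · rcases hp with rfl
        refine Or.inr ⟨(h2 i).symm, ?_⟩
        have := (hd (i + 1 + 1) (t + D + 1)).2
        rw [h2 i] at this
        show t + 1 + d (i + 1 + 1) (t + D + 1) ≤ t + D + 1
        rw [h2 i]
        omega
      · obtain ⟨p1, p2⟩ := p
        obtain ⟨hp1, hp2⟩ := hp
        simp only at hp1 hp2
        subst hp1
        have h1 := (hd (i + 1) (t + 1)).1
        exact Or.inl (Or.inl (self (i + 1) p2 (t + D) (by omega)))
  intro i t
  exact ⟨main t i, mono i t⟩
end

section
/- For every t ∈ ℕ, the recursively defined common label set admits the closed form L_V(t) = {(i,k) : i ∈ {1,2}, k ∈ ℕ, k + e_i(t) ≤ t}. -/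
/-- Closed form for the common label set:
`L_V(t) = {(i,k) : i ∈ {1,2}, k + e_i(t) ≤ t}`. -/
theorem stmt_9 (D : ℕ) (hD : 1 ≤ D) (d : Fin 2 → ℕ → ℕ)
    (hd : ∀ i τ, 1 ≤ d i τ ∧ d i τ ≤ D)
    (e : Fin 2 → ℕ → ℕ)
    (he : ∀ i t, e i t =
      (Finset.Icc (t - (D - 1)) t).inf' (Finset.nonempty_Icc.mpr (Nat.sub_le t (D - 1)))
        (fun τ => d i τ + (t - τ)))
    (L : Fin 2 → ℕ → ℕ → Set (Fin 2 × ℕ)) (LV : ℕ → Set (Fin 2 × ℕ))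
    (hL10 : ∀ i, L i 1 0 = {(i, 0)})
    (hLm0 : ∀ i m, 2 ≤ m → m ≤ D → L i m 0 = ∅)
    (hLV0 : LV 0 = ∅)
    (hL1 : ∀ i t, L i 1 (t + 1) = {(i, t + 1)})
    (hLrec : ∀ i m t, 1 ≤ m → m ≤ D - 1 → L i (m + 1) (t + 1) = L i m t)
    (hLVrec : ∀ t, LV (t + 1) =
      LV t ∪ ⋃ i : Fin 2, ⋃ m ∈ Finset.Icc (e i (t + 1)) D, L i m t) :
    ∀ t, LV t = {p : Fin 2 × ℕ | p.2 + e p.1 t ≤ t} := by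
  -- lower bound on e
  have hLb : ∀ i t, 1 ≤ e i t := by
    intro i t
    rw [he]
    apply Finset.le_inf'
    intro τ _
    have := (hd i τ).1
    omega
  -- upper bound on e
  have hUb : ∀ i t, e i t ≤ D := by
    intro i t
    rw [he]
    have hmem : t ∈ Finset.Icc (t - (D - 1)) t :=
      Finset.mem_Icc.mpr ⟨Nat.sub_le _ _, le_refl t⟩
    have h := Finset.inf'_le (fun τ => d i τ + (t - τ)) hmem
    simp only [Nat.sub_self, Nat.add_zero] at h
    exact h.trans (hd i t).2
  -- step inequality
  have hStep : ∀ i t, e i (t + 1) ≤ e i t + 1 := by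
    intro i t
    obtain ⟨τ, hτ, hτ2⟩ := Finset.exists_mem_eq_inf'
      (Finset.nonempty_Icc.mpr (Nat.sub_le t (D - 1))) (fun τ => d i τ + (t - τ))
    rw [Finset.mem_Icc] at hτ
    rw [← he] at hτ2
    by_cases hc : (t + 1) - (D - 1) ≤ τ
    · have hm : τ ∈ Finset.Icc ((t + 1) - (D - 1)) (t + 1) :=
        Finset.mem_Icc.mpr ⟨hc, by omega⟩
      have h := Finset.inf'_le (fun σ => d i σ + ((t + 1) - σ)) hm
      rw [← he] at h
      replace h : e i (t + 1) ≤ d i τ + ((t + 1) - τ) := h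
      replace hτ2 : e i t = d i τ + (t - τ) := hτ2
      omega
    · -- then τ = t - (D-1) and t - τ = D - 1, so e i t ≥ D
      have h1 : t - τ = D - 1 := by omega
      have h2 := (hd i τ).1
      have h3 := hUb i (t + 1)
      replace hτ2 : e i t = d i τ + (t - τ) := hτ2
      omega
  -- closed form for L
  have hLmem : ∀ t i m (p : Fin 2 × ℕ), 1 ≤ m → m ≤ D →
      (p ∈ L i m t ↔ p.1 = i ∧ m + p.2 = t + 1) := by
    intro t
    induction t with
    | zero =>
      intro i m p h1 h2
      rcases Nat.lt_or_ge m 2 with hm | hm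
      · have : m = 1 := by omega
        subst this
        rw [hL10]
        constructor
        · rintro rfl; simp
        · rintro ⟨ha, hb⟩
          have : p.2 = 0 := by omega
          exact Set.mem_singleton_iff.mpr (Prod.ext ha this)
      · rw [hLm0 i m hm h2]
        constructor
        · intro h; exact absurd h (Set.notMem_empty p)
        · rintro ⟨_, hb⟩; omega
    | succ t ih =>
      intro i m p h1 h2
      rcases Nat.lt_or_ge m 2 with hm | hm
      · have : m = 1 := by omega
        subst this
        rw [hL1]
        constructor
        · rintro rfl; exact ⟨rfl, by omega⟩
        · rintro ⟨ha, hb⟩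
          have : p.2 = t + 1 := by omega
          exact Set.mem_singleton_iff.mpr (Prod.ext ha this)
      · obtain ⟨m', rfl⟩ : ∃ m', m = m' + 1 := ⟨m - 1, by omega⟩
        rw [hLrec i m' t (by omega) (by omega)]
        rw [ih i m' p (by omega) (by omega)]
        omega
  -- main induction
  intro t
  induction t with
  | zero =>
    rw [hLV0]
    ext ⟨i, k⟩
    simp only [Set.mem_empty_iff_false, Set.mem_setOf_eq, false_iff]
    have := hLb i 0
    omega
  | succ t ih =>
    rw [hLVrec, ih]
    ext ⟨j, k⟩
    simp only [Set.mem_union, Set.mem_setOf_eq, Set.mem_iUnion, Finset.mem_Icc]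
    constructor
    · rintro (h | ⟨i, m, ⟨hm1, hm2⟩, hmem⟩)
      · have := hStep j t
        omega
      · have h1 := hLb i (t + 1)
        rw [hLmem t i m (j, k) (by omega) hm2] at hmem
        obtain ⟨ha, hb⟩ := hmem
        replace ha : j = i := ha
        replace hb : m + k = t + 1 := hb
        subst ha
        omega
    · intro h
      replace h : k + e j (t + 1) ≤ t + 1 := h
      rcases Nat.lt_or_ge t (k + D) with hc | hc
      · -- new element: m = t + 1 - k
        right
        have h1 := hLb j (t + 1)
        refine ⟨j, t + 1 - k, ⟨by omega, by omega⟩, ?_⟩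
        rw [hLmem t j (t + 1 - k) (j, k) (by omega) (by omega)]
        exact ⟨rfl, by omega⟩
      · left
        have := hUb j t
        omega
end
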